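/- arXiv:1509.06500 — 3 statements merged into one kernel-verified Lean document; each statement's English description precedes it below -/
import Mathlib

section
/- Let X be a nonnegative continuous random process indexed by a Polish space 𝒳 and let 𝒩 be a random measure on 𝒳 with finite intensity measure μ. Suppose that for every x ∈ 𝒳 there exists a neighbourhood V_x of x such that X_x is independent of the restriction of 𝒩 to V_x, that |X_x| ≤ Y for all x almost surely for some integrable random variable Y, and that E[Y 𝒩(𝒳)] < ∞. Then E[∫_𝒳 X_x 𝒩(dx)] = ∫_𝒳 E[X_x] μ(dx). -/
/-!
Partition `𝒳` into countably many measurable pieces, each within distance `1 / (n + 1)` of a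
centre and contained in an independence neighbourhood of that centre. For the process frozen at
the centres both sides are countable sums of `E[X_c 𝒩(A)] = E[X_c] μ(A)`, so the formula is exact.
Letting `n → ∞`, continuity of `X` and dominated convergence (by `Y` on the right and by
`Y 𝒩(𝒳)` on the left) give the formula for `X` itself.
-/

open MeasureTheory ProbabilityTheory Filter Topology
open scoped ENNReal

section Discretization

variable {𝒳 : Type*} [MeasurableSpace 𝒳]

theorem lintegral_comp_nat_eq_tsum (ν : Measure 𝒳) {k : 𝒳 → ℕ} (hk : Measurable k)
    (f : ℕ → ℝ≥0∞) : ∫⁻ x, f (k x) ∂ν = ∑' i, f i * ν (k ⁻¹' {i}) := by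
  rw [← lintegral_map measurable_from_nat hk, lintegral_countable']
  simp_rw [Measure.map_apply hk (measurableSet_singleton _)]

theorem exists_measurable_nat_cover_nhds [TopologicalSpace 𝒳] [OpensMeasurableSpace 𝒳]
    [SecondCountableTopology 𝒳] [Nonempty 𝒳] {U : 𝒳 → Set 𝒳} (hU : ∀ x, U x ∈ 𝓝 x) :
    ∃ (e : ℕ → 𝒳) (k : 𝒳 → ℕ), Measurable k ∧ ∀ x, x ∈ U (e (k x)) := by
  classical
  obtain ⟨s, hs, hsU⟩ := TopologicalSpace.countable_cover_nhds
    (fun x => interior_mem_nhds.mpr (hU x))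
  have hsne : s.Nonempty := by
    by_contra h
    simp only [Set.not_nonempty_iff_eq_empty.mp h, Set.mem_empty_iff_false, Set.iUnion_of_empty,
      Set.iUnion_empty] at hsU
    exact Set.empty_ne_univ hsU
  obtain ⟨e, rfl⟩ := hs.exists_eq_range hsne
  have hcover : ∀ x, ∃ i, x ∈ interior (U (e i)) := by
    simpa [Set.eq_univ_iff_forall] using hsU
  exact ⟨e, fun x => Nat.find (hcover x),
    measurable_find hcover fun i => isOpen_interior.measurableSet,
    fun x => interior_subset (Nat.find_spec (hcover x))⟩

theorem exists_measurable_nat_approx [PseudoMetricSpace 𝒳] [OpensMeasurableSpace 𝒳]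
    [SecondCountableTopology 𝒳] [Nonempty 𝒳] {V : 𝒳 → Set 𝒳} (hV : ∀ x, V x ∈ 𝓝 x) :
    ∃ (e : ℕ → ℕ → 𝒳) (k : ℕ → 𝒳 → ℕ), (∀ n, Measurable (k n)) ∧
      (∀ n x, x ∈ V (e n (k n x))) ∧ ∀ x, Tendsto (fun n => e n (k n x)) atTop (𝓝 x) := by
  have hU : ∀ (n : ℕ) x, V x ∩ Metric.ball x (1 / (n + 1)) ∈ 𝓝 x := fun n x =>
    inter_mem (hV x) (Metric.ball_mem_nhds x Nat.one_div_pos_of_nat)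
  choose e k hk hkU using fun n => exists_measurable_nat_cover_nhds (hU n)
  refine ⟨e, k, hk, fun n x => (hkU n x).1, fun x => ?_⟩
  rw [tendsto_iff_dist_tendsto_zero]
  refine squeeze_zero (fun _ => dist_nonneg) (fun n => ?_) tendsto_one_div_add_atTop_nhds_zero_nat
  rw [dist_comm]
  exact (hkU n x).2.le

end Discretization

section Campbell

variable {Ω 𝒳 : Type*} [MeasurableSpace Ω] [MeasurableSpace 𝒳]

theorem measurable_lintegral_comp_nat {𝒩 : Ω → Measure 𝒳} {k : 𝒳 → ℕ} (hk : Measurable k)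
    (h𝒩 : ∀ i, Measurable fun ω => 𝒩 ω (k ⁻¹' {i})) {Z : Ω → ℕ → ℝ≥0∞}
    (hZ : ∀ i, Measurable fun ω => Z ω i) :
    Measurable fun ω => ∫⁻ x, Z ω (k x) ∂𝒩 ω := by
  simp_rw [lintegral_comp_nat_eq_tsum _ hk]
  exact Measurable.tsum fun i => (hZ i).mul (h𝒩 i)

theorem lintegral_lintegral_comp_nat_eq_of_indepFun (P : Measure Ω) (𝒩 : Ω → Measure 𝒳)
    (μ : Measure 𝒳) {k : 𝒳 → ℕ} (hk : Measurable k)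
    (h𝒩 : ∀ i, Measurable fun ω => 𝒩 ω (k ⁻¹' {i}))
    (hμ : ∀ i, μ (k ⁻¹' {i}) = ∫⁻ ω, 𝒩 ω (k ⁻¹' {i}) ∂P) {Z : Ω → ℕ → ℝ≥0∞}
    (hZ : ∀ i, Measurable fun ω => Z ω i)
    (hindep : ∀ i, IndepFun (fun ω => Z ω i) (fun ω => 𝒩 ω (k ⁻¹' {i})) P) :
    ∫⁻ ω, ∫⁻ x, Z ω (k x) ∂𝒩 ω ∂P = ∫⁻ x, ∫⁻ ω, Z ω (k x) ∂P ∂μ := by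
  calc ∫⁻ ω, ∫⁻ x, Z ω (k x) ∂𝒩 ω ∂P
      = ∫⁻ ω, ∑' i, Z ω i * 𝒩 ω (k ⁻¹' {i}) ∂P := by
        simp_rw [lintegral_comp_nat_eq_tsum _ hk]
    _ = ∑' i, ∫⁻ ω, Z ω i * 𝒩 ω (k ⁻¹' {i}) ∂P :=
        lintegral_tsum fun i => ((hZ i).mul (h𝒩 i)).aemeasurable
    _ = ∑' i, (∫⁻ ω, Z ω i ∂P) * μ (k ⁻¹' {i}) := by
        congr 1 with i
        rw [lintegral_mul_eq_lintegral_mul_lintegral_of_indepFun'' (hZ i).aemeasurable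
          (h𝒩 i).aemeasurable (hindep i), hμ]
    _ = ∫⁻ x, ∫⁻ ω, Z ω (k x) ∂P ∂μ :=
        (lintegral_comp_nat_eq_tsum μ hk fun i => ∫⁻ ω, Z ω i ∂P).symm

end Campbell

section DominatedConvergence

variable {Ω 𝒳 : Type*} [MeasurableSpace Ω] [MeasurableSpace 𝒳]

theorem tendsto_lintegral_of_le_const {ν : Measure 𝒳} {F : ℕ → 𝒳 → ℝ≥0∞} {f : 𝒳 → ℝ≥0∞}
    {C : ℝ≥0∞} (hF : ∀ n, Measurable (F n)) (hle : ∀ n x, F n x ≤ C) (hC : C * ν Set.univ ≠ ⊤)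
    (hlim : ∀ x, Tendsto (fun n => F n x) atTop (𝓝 (f x))) :
    Tendsto (fun n => ∫⁻ x, F n x ∂ν) atTop (𝓝 (∫⁻ x, f x ∂ν)) :=
  tendsto_lintegral_of_dominated_convergence (fun _ => C) hF
    (fun n => ae_of_all _ (hle n)) (by rwa [lintegral_const]) (ae_of_all _ hlim)

variable {F : ℕ → Ω → 𝒳 → ℝ≥0∞} {f : Ω → 𝒳 → ℝ≥0∞} {W : Ω → ℝ≥0∞}

theorem tendsto_lintegral_lintegral_randomMeasure (P : Measure Ω) (𝒩 : Ω → Measure 𝒳)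
    (hF : ∀ n ω, Measurable (F n ω)) (hFω : ∀ n, Measurable fun ω => ∫⁻ x, F n ω x ∂𝒩 ω)
    (hle : ∀ᵐ ω ∂P, ∀ n x, F n ω x ≤ W ω)
    (hW : AEMeasurable (fun ω => W ω * 𝒩 ω Set.univ) P)
    (hWfin : ∫⁻ ω, W ω * 𝒩 ω Set.univ ∂P ≠ ⊤)
    (hlim : ∀ ω x, Tendsto (fun n => F n ω x) atTop (𝓝 (f ω x))) :
    Tendsto (fun n => ∫⁻ ω, ∫⁻ x, F n ω x ∂𝒩 ω ∂P) atTop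
      (𝓝 (∫⁻ ω, ∫⁻ x, f ω x ∂𝒩 ω ∂P)) := by
  refine tendsto_lintegral_of_dominated_convergence _ hFω (fun n => ?_) hWfin ?_
  · filter_upwards [hle] with ω hω
    calc ∫⁻ x, F n ω x ∂𝒩 ω ≤ ∫⁻ _, W ω ∂𝒩 ω := lintegral_mono (hω n)
      _ = W ω * 𝒩 ω Set.univ := lintegral_const _
  · filter_upwards [hle, ae_lt_top' hW hWfin] with ω hω hfin
    exact tendsto_lintegral_of_le_const (hF · ω) hω hfin.ne (hlim ω)

theorem tendsto_lintegral_lintegral_swap (P : Measure Ω) (μ : Measure 𝒳) [IsFiniteMeasure μ]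
    (hF : ∀ n x, Measurable fun ω => F n ω x) (hFx : ∀ n, Measurable fun x => ∫⁻ ω, F n ω x ∂P)
    (hle : ∀ᵐ ω ∂P, ∀ n x, F n ω x ≤ W ω) (hWfin : ∫⁻ ω, W ω ∂P ≠ ⊤)
    (hlim : ∀ ω x, Tendsto (fun n => F n ω x) atTop (𝓝 (f ω x))) :
    Tendsto (fun n => ∫⁻ x, ∫⁻ ω, F n ω x ∂P ∂μ) atTop (𝓝 (∫⁻ x, ∫⁻ ω, f ω x ∂P ∂μ)) := by
  refine tendsto_lintegral_of_le_const hFx (fun n x => ?_)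
    (ENNReal.mul_ne_top hWfin (measure_ne_top μ _)) fun x => ?_
  · exact lintegral_mono_ae (by filter_upwards [hle] with ω hω using hω n x)
  · exact tendsto_lintegral_of_dominated_convergence W (hF · x)
      (fun n => by filter_upwards [hle] with ω hω using hω n x) hWfin
      (ae_of_all _ fun ω => hlim ω x)

end DominatedConvergence

theorem campbell_locally_independent_general
    {Ω : Type*} [MeasurableSpace Ω] (P : Measure Ω)
    {𝒳 : Type*} [TopologicalSpace 𝒳] [PolishSpace 𝒳] [MeasurableSpace 𝒳] [BorelSpace 𝒳]
    (𝒩 : Ω → Measure 𝒳)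
    (h𝒩meas : ∀ B : Set 𝒳, MeasurableSet B → Measurable fun ω => 𝒩 ω B)
    (μ : Measure 𝒳) [IsFiniteMeasure μ]
    (hμ : ∀ B : Set 𝒳, MeasurableSet B → μ B = ∫⁻ ω, 𝒩 ω B ∂P)
    (X : Ω → 𝒳 → ℝ)
    (hXc : ∀ ω, Continuous (X ω))
    (hXm : ∀ x, Measurable fun ω => X ω x)
    (hindep : ∀ x : 𝒳, ∃ V ∈ nhds x, ∀ B ⊆ V, MeasurableSet B →
      IndepFun (fun ω => X ω x) (fun ω => 𝒩 ω B) P)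
    (Y : Ω → ℝ) (hY : Integrable Y P)
    (hdom : ∀ᵐ ω ∂P, ∀ x, |X ω x| ≤ Y ω)
    (hYN : ∫⁻ ω, ENNReal.ofReal (Y ω) * 𝒩 ω Set.univ ∂P < ⊤) :
    ∫⁻ ω, (∫⁻ x, ENNReal.ofReal (X ω x) ∂(𝒩 ω)) ∂P
      = ∫⁻ x, (∫⁻ ω, ENNReal.ofReal (X ω x) ∂P) ∂μ := by
  rcases isEmpty_or_nonempty 𝒳 with h𝒳 | h𝒳
  · simp [Measure.eq_zero_of_isEmpty]
  let := TopologicalSpace.pseudoMetrizableSpacePseudoMetric 𝒳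
  choose V hV hVindep using hindep
  obtain ⟨e, k, hk, hkV, hek⟩ := exists_measurable_nat_approx hV
  have hpiece : ∀ n i, MeasurableSet (k n ⁻¹' {i}) := fun n i => hk n (measurableSet_singleton i)
  have hle : ∀ᵐ ω ∂P, ∀ (n : ℕ) x,
      ENNReal.ofReal (X ω (e n (k n x))) ≤ ENNReal.ofReal (Y ω) := by
    filter_upwards [hdom] with ω hω n x
    exact ENNReal.ofReal_le_ofReal ((le_abs_self _).trans (hω _))
  have hlim : ∀ ω x, Tendsto (fun n => ENNReal.ofReal (X ω (e n (k n x)))) atTop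
      (𝓝 (ENNReal.ofReal (X ω x))) := fun ω x =>
    (ENNReal.continuous_ofReal.tendsto _).comp (((hXc ω).tendsto x).comp (hek x))
  have hdiscrete : ∀ n, ∫⁻ ω, ∫⁻ x, ENNReal.ofReal (X ω (e n (k n x))) ∂𝒩 ω ∂P
      = ∫⁻ x, ∫⁻ ω, ENNReal.ofReal (X ω (e n (k n x))) ∂P ∂μ := fun n =>
    lintegral_lintegral_comp_nat_eq_of_indepFun P 𝒩 μ (hk n) (fun i => h𝒩meas _ (hpiece n i))
      (fun i => hμ _ (hpiece n i)) (fun i => (hXm _).ennreal_ofReal) fun i =>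
      (hVindep _ _ (by rintro x rfl; exact hkV n x) (hpiece n i)).comp
        ENNReal.measurable_ofReal measurable_id
  have hleft := tendsto_lintegral_lintegral_randomMeasure P 𝒩
    (fun n ω => ((hXc ω).measurable.comp (measurable_from_nat.comp (hk n))).ennreal_ofReal)
    (fun n => measurable_lintegral_comp_nat (hk n) (fun i => h𝒩meas _ (hpiece n i))
      fun i => (hXm (e n i)).ennreal_ofReal) hle
    (hY.aemeasurable.ennreal_ofReal.mul (h𝒩meas _ MeasurableSet.univ).aemeasurable) hYN.ne hlim
  have hright := tendsto_lintegral_lintegral_swap P μ (fun n x => (hXm _).ennreal_ofReal)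
    (fun n => (measurable_from_nat (f := fun i => ∫⁻ ω, ENNReal.ofReal (X ω (e n i)) ∂P)).comp
      (hk n)) hle hY.lintegral_lt_top.ne hlim
  exact tendsto_nhds_unique hleft (hright.congr fun n => (hdiscrete n).symm)

/-- Extended Campbell formula: if `X` is a nonnegative continuous random process on a
Polish space `𝒳` which is locally independent from the random measure `𝒩` (with finite
intensity `μ`), dominated by an integrable `Y` with `E[Y 𝒩(𝒳)] < ∞`, then
`E[∫ X_x 𝒩(dx)] = ∫ E[X_x] μ(dx)`. -/
theorem campbell_locally_independent
    {Ω : Type*} [MeasurableSpace Ω] (P : Measure Ω) [IsProbabilityMeasure P]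
    {𝒳 : Type*} [TopologicalSpace 𝒳] [PolishSpace 𝒳] [MeasurableSpace 𝒳] [BorelSpace 𝒳]
    (𝒩 : Ω → Measure 𝒳)
    (h𝒩meas : ∀ B : Set 𝒳, MeasurableSet B → Measurable fun ω => 𝒩 ω B)
    (μ : Measure 𝒳) [IsFiniteMeasure μ]
    (hμ : ∀ B : Set 𝒳, MeasurableSet B → μ B = ∫⁻ ω, 𝒩 ω B ∂P)
    (X : Ω → 𝒳 → ℝ)
    (hXc : ∀ ω, Continuous (X ω))
    (hXm : ∀ x, Measurable fun ω => X ω x)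
    (hXnn : ∀ ω x, 0 ≤ X ω x)
    (hindep : ∀ x : 𝒳, ∃ V ∈ nhds x, ∀ B ⊆ V, MeasurableSet B →
      IndepFun (fun ω => X ω x) (fun ω => 𝒩 ω B) P)
    (Y : Ω → ℝ) (hY : Integrable Y P)
    (hdom : ∀ᵐ ω ∂P, ∀ x, |X ω x| ≤ Y ω)
    (hYN : ∫⁻ ω, ENNReal.ofReal (Y ω) * 𝒩 ω Set.univ ∂P < ⊤) :
    ∫⁻ ω, (∫⁻ x, ENNReal.ofReal (X ω x) ∂(𝒩 ω)) ∂P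
      = ∫⁻ x, (∫⁻ ω, ENNReal.ofReal (X ω x) ∂P) ∂μ :=
  campbell_locally_independent_general P 𝒩 h𝒩meas μ hμ X hXc hXm hindep Y hY hdom hYN
end

section
/- Let X be a nonnegative process on [0,T] × 𝒳 (𝒳 Polish) that is càdlàg in the time variable and continuous in the space variable, and let 𝒩 be a random measure on [0,T] × 𝒳 with finite intensity measure μ. Suppose that for each s ∈ [0,T] the family (X_{s,x}, x ∈ 𝒳) is independent of the restriction of 𝒩 to [0,s] × 𝒳, that |X_{s,x}| ≤ Y for all (s,x) a.s. for some integrable Y, and that E[Y 𝒩([0,T]×𝒳)] < ∞. Then E[∫ X_{s,x} 𝒩(ds,dx)] = ∫ E[X_{s,x}] μ(ds,dx). -/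
/-!
For an integrand that, on each cell of a countable partition of `[0, T] × 𝒳`, equals
`X_{t, x}` sampled at a fixed point `(t, x)` whose time `t` is the right end of the cell,
the formula reduces cell by cell to `E[Z 𝒩(A)] = E[Z] μ(A)`: the sample is independent of
`𝒩` restricted to `[0, t] × 𝒳 ⊇ A`. A general `X` is reached in two limits, first in space
(nearest point among a dense sequence, using continuity in `x`), then in time (right ends of
a shrinking grid, using right-continuity in `s`). Each limit is passed on both sides by
dominated convergence with the bound `Y`, which is integrable for `P ⊗ 𝒩` and `P ⊗ μ`.
-/

open MeasureTheory ProbabilityTheory Filter Topology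
open scoped ENNReal

section TimeGrid

variable {T : ℝ}

noncomputable def timeIndex (T : ℝ) (n : ℕ) (s : ℝ) : ℕ := ⌈s / (T / (n + 1))⌉₊

/-- Capped at `T`, so that every grid point lies in `[0, T]`, where independence is assumed. -/
noncomputable def gridPoint (T : ℝ) (n k : ℕ) : ℝ := min (k * (T / (n + 1))) T

theorem measurable_timeIndex (T : ℝ) (n : ℕ) : Measurable (timeIndex T n) :=
  Nat.measurable_ceil.comp (measurable_id.div_const _)

theorem gridPoint_mem_Icc (hT : 0 ≤ T) (n k : ℕ) : gridPoint T n k ∈ Set.Icc 0 T :=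
  ⟨le_min (by positivity) hT, min_le_right _ _⟩

theorem le_gridPoint_timeIndex (hT : 0 < T) (n : ℕ) {s : ℝ} (hs : s ≤ T) :
    s ≤ gridPoint T n (timeIndex T n s) := by
  have hδ : 0 < T / (n + 1) := by positivity
  refine le_min ?_ hs
  calc s = s / (T / (n + 1)) * (T / (n + 1)) := by field_simp
    _ ≤ _ := by gcongr; exact Nat.le_ceil _

theorem gridPoint_timeIndex_le (hT : 0 < T) (n : ℕ) {s : ℝ} (hs : 0 ≤ s) :
    gridPoint T n (timeIndex T n s) ≤ s + T / (n + 1) := by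
  have hδ : 0 < T / (n + 1) := by positivity
  refine (min_le_left _ _).trans ?_
  calc (timeIndex T n s : ℝ) * (T / (n + 1)) ≤ (s / (T / (n + 1)) + 1) * (T / (n + 1)) := by
        gcongr; exact (Nat.ceil_lt_add_one (by positivity)).le
    _ = s + T / (n + 1) := by field_simp

theorem tendsto_gridPoint_timeIndex (hT : 0 < T) {s : ℝ} (hs : s ∈ Set.Icc 0 T) :
    Tendsto (fun n => gridPoint T n (timeIndex T n s)) atTop (𝓝[≥] s) := by
  have h_upper : Tendsto (fun n : ℕ => s + T / (n + 1)) atTop (𝓝 s) := by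
    simpa using tendsto_const_nhds.add
      ((tendsto_const_div_atTop_nhds_zero_nat T).comp (tendsto_add_atTop_nat 1))
  refine tendsto_nhdsWithin_of_tendsto_nhds_of_eventually_within _
    (tendsto_of_tendsto_of_tendsto_of_le_of_le tendsto_const_nhds h_upper
      (fun n => le_gridPoint_timeIndex hT n hs.2) (fun n => gridPoint_timeIndex_le hT n hs.1))
    (Eventually.of_forall fun n => le_gridPoint_timeIndex hT n hs.2)

end TimeGrid

section CampbellFormula

variable {Ω Q : Type*} [MeasurableSpace Ω] [MeasurableSpace Q]

/-- Measurability of both iterated integrands is part of the formula so that it passes to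
limits: `ω ↦ ∫⁻ q, F ω q ∂𝒩 ω` is not known to be measurable for the limiting integrand. -/
def CampbellFormula (P : Measure Ω) (𝒩 : Ω → Measure Q) (μ : Measure Q)
    (F : Ω → Q → ℝ≥0∞) : Prop :=
  AEMeasurable (fun ω => ∫⁻ q, F ω q ∂𝒩 ω) P ∧ AEMeasurable (fun q => ∫⁻ ω, F ω q ∂P) μ ∧
    ∫⁻ ω, ∫⁻ q, F ω q ∂𝒩 ω ∂P = ∫⁻ q, ∫⁻ ω, F ω q ∂P ∂μ

theorem ae_tendsto_lintegral_of_dominated {P : Measure Ω} {ν : Ω → Measure Q}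
    {F : ℕ → Ω → Q → ℝ≥0∞} {f : Ω → Q → ℝ≥0∞} (G : Ω → Q → ℝ≥0∞)
    (hF_meas : ∀ᵐ ω ∂P, ∀ i, AEMeasurable (F i ω) (ν ω))
    (h_bound : ∀ᵐ ω ∂P, ∀ i, ∀ᵐ q ∂ν ω, F i ω q ≤ G ω q)
    (hG : ∀ᵐ ω ∂P, ∫⁻ q, G ω q ∂ν ω ≠ ∞)
    (h_lim : ∀ᵐ ω ∂P, ∀ᵐ q ∂ν ω, Tendsto (fun i => F i ω q) atTop (𝓝 (f ω q))) :
    ∀ᵐ ω ∂P, Tendsto (fun i => ∫⁻ q, F i ω q ∂ν ω) atTop (𝓝 (∫⁻ q, f ω q ∂ν ω)) := by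
  filter_upwards [hF_meas, h_bound, hG, h_lim] with ω hF_meas h_bound hG h_lim
  exact tendsto_lintegral_of_dominated_convergence' (G ω) hF_meas h_bound hG h_lim

theorem tendsto_lintegral_lintegral_of_dominated {P : Measure Ω} {ν : Ω → Measure Q}
    {F : ℕ → Ω → Q → ℝ≥0∞} {f : Ω → Q → ℝ≥0∞} (G : Ω → Q → ℝ≥0∞)
    (hF_meas : ∀ᵐ ω ∂P, ∀ i, AEMeasurable (F i ω) (ν ω))
    (hF_meas' : ∀ i, AEMeasurable (fun ω => ∫⁻ q, F i ω q ∂ν ω) P)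
    (h_bound : ∀ᵐ ω ∂P, ∀ i, ∀ᵐ q ∂ν ω, F i ω q ≤ G ω q)
    (hG_meas : AEMeasurable (fun ω => ∫⁻ q, G ω q ∂ν ω) P)
    (hG : ∫⁻ ω, ∫⁻ q, G ω q ∂ν ω ∂P ≠ ∞)
    (h_lim : ∀ᵐ ω ∂P, ∀ᵐ q ∂ν ω, Tendsto (fun i => F i ω q) atTop (𝓝 (f ω q))) :
    Tendsto (fun i => ∫⁻ ω, ∫⁻ q, F i ω q ∂ν ω ∂P) atTop
      (𝓝 (∫⁻ ω, ∫⁻ q, f ω q ∂ν ω ∂P)) :=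
  tendsto_lintegral_of_dominated_convergence' _ hF_meas'
    (fun i => h_bound.mono fun _ h => lintegral_mono_ae (h i)) hG
    (ae_tendsto_lintegral_of_dominated G hF_meas h_bound
      ((ae_lt_top' hG_meas hG).mono fun _ h => h.ne) h_lim)

theorem CampbellFormula.of_tendsto {P : Measure Ω} {𝒩 : Ω → Measure Q} {μ : Measure Q}
    [IsFiniteMeasure μ] {F : ℕ → Ω → Q → ℝ≥0∞} {f : Ω → Q → ℝ≥0∞} {B : Ω → ℝ≥0∞}
    (hF : ∀ i, CampbellFormula P 𝒩 μ (F i))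
    (hF_meas : ∀ i ω, AEMeasurable (F i ω) (𝒩 ω))
    (hF_meas' : ∀ i q, AEMeasurable (fun ω => F i ω q) P)
    (h_bound : ∀ᵐ ω ∂P, ∀ i q, F i ω q ≤ B ω) (hB : ∫⁻ ω, B ω ∂P ≠ ∞)
    (hB𝒩_meas : AEMeasurable (fun ω => B ω * 𝒩 ω Set.univ) P)
    (hB𝒩 : ∫⁻ ω, B ω * 𝒩 ω Set.univ ∂P ≠ ∞)
    (h_lim𝒩 : ∀ᵐ ω ∂P, ∀ᵐ q ∂𝒩 ω, Tendsto (fun i => F i ω q) atTop (𝓝 (f ω q)))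
    (h_limμ : ∀ᵐ q ∂μ, ∀ᵐ ω ∂P, Tendsto (fun i => F i ω q) atTop (𝓝 (f ω q))) :
    CampbellFormula P 𝒩 μ f := by
  have h𝒩_bound : ∀ᵐ ω ∂P, ∀ i, ∀ᵐ q ∂𝒩 ω, F i ω q ≤ B ω :=
    h_bound.mono fun ω h i => ae_of_all _ (h i)
  have hμ_bound : ∀ᵐ q ∂μ, ∀ i, ∀ᵐ ω ∂P, F i ω q ≤ B ω :=
    ae_of_all _ fun q i => h_bound.mono fun ω h => h i q
  have hB𝒩_meas' : AEMeasurable (fun ω => ∫⁻ _, B ω ∂𝒩 ω) P := by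
    simpa only [lintegral_const] using hB𝒩_meas
  have hB𝒩' : ∫⁻ ω, ∫⁻ _, B ω ∂𝒩 ω ∂P ≠ ∞ := by simpa only [lintegral_const] using hB𝒩
  have hBμ : ∫⁻ _, ∫⁻ ω, B ω ∂P ∂μ ≠ ∞ := by
    simpa only [lintegral_const] using ENNReal.mul_ne_top hB (measure_ne_top μ _)
  have hF_meas𝒩 : ∀ᵐ ω ∂P, ∀ i, AEMeasurable (F i ω) (𝒩 ω) := ae_of_all _ fun ω i => hF_meas i ω
  have hF_measμ : ∀ᵐ q ∂μ, ∀ i, AEMeasurable (fun ω => F i ω q) P :=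
    ae_of_all _ fun q i => hF_meas' i q
  have h𝒩_lim := ae_tendsto_lintegral_of_dominated _ hF_meas𝒩 h𝒩_bound
    ((ae_lt_top' hB𝒩_meas' hB𝒩').mono fun _ h => h.ne) h_lim𝒩
  have hμ_lim := ae_tendsto_lintegral_of_dominated (ν := fun _ => P)
    (F := fun i q ω => F i ω q) _ hF_measμ hμ_bound (ae_of_all _ fun _ => hB) h_limμ
  refine ⟨aemeasurable_of_tendsto_metrizable_ae atTop (fun i => (hF i).1) h𝒩_lim,
    aemeasurable_of_tendsto_metrizable_ae atTop (fun i => (hF i).2.1) hμ_lim, ?_⟩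
  refine tendsto_nhds_unique ?_ (tendsto_lintegral_lintegral_of_dominated (ν := fun _ => P)
    (F := fun i q ω => F i ω q) _ hF_measμ (fun i => (hF i).2.1) hμ_bound aemeasurable_const
    hBμ h_limμ)
  simpa only [(hF _).2.2] using tendsto_lintegral_lintegral_of_dominated _ hF_meas𝒩
    (fun i => (hF i).1) h𝒩_bound hB𝒩_meas' hB𝒩' h_lim𝒩

theorem campbellFormula_tsum_indicator_mul {ι : Type*} [Countable ι] {P : Measure Ω}
    {𝒩 : Ω → Measure Q} {μ : Measure Q}
    (h𝒩 : ∀ B, MeasurableSet B → Measurable fun ω => 𝒩 ω B)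
    (hμ : ∀ B, MeasurableSet B → μ B = ∫⁻ ω, 𝒩 ω B ∂P)
    {A : ι → Set Q} (hA : ∀ i, MeasurableSet (A i)) {Z : ι → Ω → ℝ≥0∞}
    (hZ : ∀ i, Measurable (Z i)) (hind : ∀ i, IndepFun (Z i) (fun ω => 𝒩 ω (A i)) P) :
    CampbellFormula P 𝒩 μ fun ω q => ∑' i, (A i).indicator 1 q * Z i ω := by
  have h_ind_meas : ∀ i, Measurable ((A i).indicator (1 : Q → ℝ≥0∞)) :=
    fun i => measurable_one.indicator (hA i)
  have h𝒩_int : ∀ ω, ∫⁻ q, ∑' i, (A i).indicator 1 q * Z i ω ∂𝒩 ω = ∑' i, Z i ω * 𝒩 ω (A i) := by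
    intro ω
    rw [lintegral_tsum fun i => ((h_ind_meas i).mul_const _).aemeasurable]
    refine tsum_congr fun i => ?_
    rw [lintegral_mul_const _ (h_ind_meas i), lintegral_indicator_one (hA i), mul_comm]
  have hP_int : ∀ q, ∫⁻ ω, ∑' i, (A i).indicator 1 q * Z i ω ∂P =
      ∑' i, (A i).indicator 1 q * ∫⁻ ω, Z i ω ∂P := by
    intro q
    rw [lintegral_tsum fun i => ((hZ i).const_mul _).aemeasurable]
    simp only [lintegral_const_mul _ (hZ _)]
  simp only [CampbellFormula, h𝒩_int, hP_int]
  refine ⟨(Measurable.tsum fun i => (hZ i).mul (h𝒩 _ (hA i))).aemeasurable,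
    (Measurable.tsum fun i => (h_ind_meas i).mul_const _).aemeasurable, ?_⟩
  rw [lintegral_tsum (f := fun i ω => Z i ω * 𝒩 ω (A i))
      fun i => ((hZ i).mul (h𝒩 _ (hA i))).aemeasurable,
    lintegral_tsum fun i => ((h_ind_meas i).mul_const _).aemeasurable]
  refine tsum_congr fun i => ?_
  rw [lintegral_mul_const _ (h_ind_meas i), lintegral_indicator_one (hA i), hμ _ (hA i), mul_comm]
  exact lintegral_mul_eq_lintegral_mul_lintegral_of_indepFun (hZ i) (h𝒩 _ (hA i)) (hind i)

theorem campbellFormula_indicator_comp {ι : Type*} [Countable ι] [MeasurableSpace ι]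
    [MeasurableSingletonClass ι] {P : Measure Ω} {𝒩 : Ω → Measure Q} {μ : Measure Q}
    (h𝒩 : ∀ B, MeasurableSet B → Measurable fun ω => 𝒩 ω B)
    (hμ : ∀ B, MeasurableSet B → μ B = ∫⁻ ω, 𝒩 ω B ∂P)
    {S : Set Q} (hS : MeasurableSet S) {κ : Q → ι} (hκ : Measurable κ) {Z : ι → Ω → ℝ≥0∞}
    (hZ : ∀ i, Measurable (Z i)) (hind : ∀ i, IndepFun (Z i) (fun ω => 𝒩 ω (S ∩ κ ⁻¹' {i})) P) :
    CampbellFormula P 𝒩 μ fun ω q => S.indicator (fun q => Z (κ q) ω) q := by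
  have h_level : ∀ ω q, S.indicator (fun q => Z (κ q) ω) q =
      ∑' i, (S ∩ κ ⁻¹' {i}).indicator 1 q * Z i ω := by
    intro ω q
    rw [tsum_eq_single (κ q) fun i hi => by simp [Ne.symm hi]]
    by_cases hq : q ∈ S <;> simp [hq]
  simp only [h_level]
  exact campbellFormula_tsum_indicator_mul h𝒩 hμ (fun i => hS.inter (hκ (.singleton i))) hZ hind

end CampbellFormula

theorem IndepFun.eval_measure_apply {Ω Q 𝒳 β : Type*} [MeasurableSpace Ω] [MeasurableSpace Q]
    [MeasurableSpace β] {P : Measure Ω} {X : Ω → 𝒳 → β} {𝒩 : Ω → Measure Q} {R A : Set Q}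
    (h : IndepFun X (fun ω => (𝒩 ω).restrict R) P) (hA : MeasurableSet A) (hAR : A ⊆ R)
    (x : 𝒳) : IndepFun (fun ω => X ω x) (fun ω => 𝒩 ω A) P := by
  have := h.comp (measurable_pi_apply x) (Measure.measurable_coe hA)
  simpa [Function.comp_def, Measure.restrict_apply hA, Set.inter_eq_self_of_subset_left hAR]
    using this

section GridApprox

variable {Ω 𝒳 : Type*} {X : Ω → ℝ → 𝒳 → ℝ} {T : ℝ}

noncomputable def gridApprox (X : Ω → ℝ → 𝒳 → ℝ) (T : ℝ) (n : ℕ) (π : 𝒳 → 𝒳) (ω : Ω)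
    (q : ℝ × 𝒳) : ℝ≥0∞ :=
  (Set.Icc 0 T ×ˢ Set.univ).indicator
    (fun q => ENNReal.ofReal (X ω (gridPoint T n (timeIndex T n q.1)) (π q.2))) q

theorem measurable_gridApprox [MeasurableSpace 𝒳] [TopologicalSpace 𝒳] [OpensMeasurableSpace 𝒳]
    {ω : Ω} (hXc : ∀ s, Continuous (X ω s)) {π : 𝒳 → 𝒳} (hπ : Measurable π) (n : ℕ) :
    Measurable (gridApprox X T n π ω) := by
  have h_grid : Measurable fun p : 𝒳 × ℕ => X ω (gridPoint T n p.2) p.1 :=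
    measurable_from_prod_countable_left fun k => (hXc (gridPoint T n k)).measurable
  exact (h_grid.comp ((hπ.comp measurable_snd).prodMk
    ((measurable_timeIndex T n).comp measurable_fst))).ennreal_ofReal.indicator
    (measurableSet_Icc.prod .univ)

theorem measurable_gridApprox_apply [MeasurableSpace Ω]
    (hXm : ∀ s x, Measurable fun ω => X ω s x) (n : ℕ) (π : 𝒳 → 𝒳) (q : ℝ × 𝒳) :
    Measurable fun ω => gridApprox X T n π ω q := by
  by_cases hq : q ∈ Set.Icc 0 T ×ˢ Set.univ
  · simpa only [gridApprox, Set.indicator_of_mem hq] using (hXm _ _).ennreal_ofReal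
  · simp only [gridApprox, Set.indicator_of_notMem hq, measurable_const]

theorem gridApprox_le {ω : Ω} {y : ℝ} (h : ∀ s x, |X ω s x| ≤ y) (n : ℕ) (π : 𝒳 → 𝒳)
    (q : ℝ × 𝒳) : gridApprox X T n π ω q ≤ ENNReal.ofReal y :=
  Set.indicator_le (fun _ _ => ENNReal.ofReal_le_ofReal ((le_abs_self _).trans (h _ _))) q

theorem tendsto_gridApprox_nearestPt [MeasurableSpace 𝒳] [PseudoEMetricSpace 𝒳]
    [OpensMeasurableSpace 𝒳] {u : ℕ → 𝒳} (hu : DenseRange u) {ω : Ω}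
    (hXc : ∀ s, Continuous (X ω s)) (n : ℕ) (q : ℝ × 𝒳) :
    Tendsto (fun m => gridApprox X T n (SimpleFunc.nearestPt u m) ω q) atTop
      (𝓝 (gridApprox X T n id ω q)) := by
  by_cases hq : q ∈ Set.Icc 0 T ×ˢ Set.univ
  · simp only [gridApprox, Set.indicator_of_mem hq, id]
    exact ENNReal.continuous_ofReal.continuousAt.tendsto.comp
      ((hXc _).continuousAt.tendsto.comp
        (SimpleFunc.tendsto_nearestPt (hu.closure_range ▸ trivial)))
  · simp only [gridApprox, Set.indicator_of_notMem hq, tendsto_const_nhds]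

theorem tendsto_gridApprox_id (hT : 0 < T) {ω : Ω}
    (hX : ∀ x s, ContinuousWithinAt (fun u => X ω u x) (Set.Ici s) s) {q : ℝ × 𝒳}
    (hq : q ∈ Set.Icc 0 T ×ˢ Set.univ) :
    Tendsto (fun n => gridApprox X T n id ω q) atTop (𝓝 (ENNReal.ofReal (X ω q.1 q.2))) := by
  simp only [gridApprox, Set.indicator_of_mem hq, id]
  exact ENNReal.continuous_ofReal.continuousAt.tendsto.comp
    ((hX q.2 q.1).tendsto.comp (tendsto_gridPoint_timeIndex hT hq.1))

end GridApprox

section Campbell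

variable {Ω 𝒳 : Type*} [MeasurableSpace Ω] [MeasurableSpace 𝒳] {P : Measure Ω}
  {𝒩 : Ω → Measure (ℝ × 𝒳)} {μ : Measure (ℝ × 𝒳)} {X : Ω → ℝ → 𝒳 → ℝ} {T : ℝ}

theorem campbellFormula_gridApprox_nearestPt [PseudoEMetricSpace 𝒳] [OpensMeasurableSpace 𝒳]
    (h𝒩 : ∀ B, MeasurableSet B → Measurable fun ω => 𝒩 ω B)
    (hμ : ∀ B, MeasurableSet B → μ B = ∫⁻ ω, 𝒩 ω B ∂P) (hT : 0 < T)
    (hXm : ∀ s x, Measurable fun ω => X ω s x)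
    (hindep : ∀ s ∈ Set.Icc 0 T,
      IndepFun (fun ω => X ω s) (fun ω => (𝒩 ω).restrict (Set.Icc 0 s ×ˢ Set.univ)) P)
    (u : ℕ → 𝒳) (n m : ℕ) :
    CampbellFormula P 𝒩 μ (gridApprox X T n (SimpleFunc.nearestPt u m)) := by
  set κ : ℝ × 𝒳 → ℕ × ℕ := fun q => (timeIndex T n q.1, SimpleFunc.nearestPtInd u m q.2)
  have hκ : Measurable κ := ((measurable_timeIndex T n).comp measurable_fst).prodMk
    ((SimpleFunc.nearestPtInd u m).measurable.comp measurable_snd)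
  refine campbellFormula_indicator_comp h𝒩 hμ (measurableSet_Icc.prod .univ) hκ
    (Z := fun p ω => ENNReal.ofReal (X ω (gridPoint T n p.1) (u p.2)))
    (fun p => (hXm _ _).ennreal_ofReal) fun ⟨k, j⟩ => ?_
  have h_cell : Set.Icc 0 T ×ˢ Set.univ ∩ κ ⁻¹' {(k, j)} ⊆
      Set.Icc 0 (gridPoint T n k) ×ˢ Set.univ := by
    rintro q ⟨⟨⟨hq0, hqT⟩, -⟩, hqk⟩
    simp only [κ, Set.mem_preimage, Set.mem_singleton_iff, Prod.mk.injEq] at hqk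
    exact ⟨⟨hq0, hqk.1 ▸ le_gridPoint_timeIndex hT n hqT⟩, trivial⟩
  exact (IndepFun.eval_measure_apply (hindep _ (gridPoint_mem_Icc hT.le n k))
    ((measurableSet_Icc.prod .univ).inter (hκ (.singleton _))) h_cell (u j)).comp
    ENNReal.measurable_ofReal measurable_id

theorem campbellFormula_gridApprox_id [PseudoEMetricSpace 𝒳] [OpensMeasurableSpace 𝒳]
    [TopologicalSpace.SeparableSpace 𝒳] [Nonempty 𝒳] [IsFiniteMeasure μ]
    (h𝒩 : ∀ B, MeasurableSet B → Measurable fun ω => 𝒩 ω B)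
    (hμ : ∀ B, MeasurableSet B → μ B = ∫⁻ ω, 𝒩 ω B ∂P) (hT : 0 < T)
    (hXm : ∀ s x, Measurable fun ω => X ω s x) (hXc : ∀ ω s, Continuous (X ω s))
    (hindep : ∀ s ∈ Set.Icc 0 T,
      IndepFun (fun ω => X ω s) (fun ω => (𝒩 ω).restrict (Set.Icc 0 s ×ˢ Set.univ)) P)
    {Y : Ω → ℝ} (hY : Integrable Y P) (hdom : ∀ᵐ ω ∂P, ∀ s x, |X ω s x| ≤ Y ω)
    (hYN : ∫⁻ ω, ENNReal.ofReal (Y ω) * 𝒩 ω Set.univ ∂P < ⊤) (n : ℕ) :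
    CampbellFormula P 𝒩 μ (gridApprox X T n id) := by
  obtain ⟨u, hu⟩ := TopologicalSpace.exists_dense_seq 𝒳
  exact CampbellFormula.of_tendsto (B := fun ω => ENNReal.ofReal (Y ω))
    (campbellFormula_gridApprox_nearestPt h𝒩 hμ hT hXm hindep u n)
    (fun m ω => (measurable_gridApprox (hXc ω) (SimpleFunc.measurable _) n).aemeasurable)
    (fun m q => (measurable_gridApprox_apply hXm n _ q).aemeasurable)
    (hdom.mono fun ω h m => gridApprox_le h n _) hY.lintegral_lt_top.ne
    (hY.aemeasurable.ennreal_ofReal.mul (h𝒩 _ .univ).aemeasurable) hYN.ne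
    (ae_of_all _ fun ω => ae_of_all _ (tendsto_gridApprox_nearestPt hu (hXc ω) n))
    (ae_of_all _ fun q => ae_of_all _ fun ω => tendsto_gridApprox_nearestPt hu (hXc ω) n q)

end Campbell

theorem campbell_time_indexed_general
    {Ω : Type*} [MeasurableSpace Ω] (P : Measure Ω)
    {𝒳 : Type*} [TopologicalSpace 𝒳] [PolishSpace 𝒳] [MeasurableSpace 𝒳] [BorelSpace 𝒳]
    (T : ℝ) (hT : 0 < T)
    (𝒩 : Ω → Measure (ℝ × 𝒳))
    (h𝒩meas : ∀ B : Set (ℝ × 𝒳), MeasurableSet B → Measurable fun ω => 𝒩 ω B)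
    (h𝒩supp : ∀ ω, 𝒩 ω (Set.Icc (0:ℝ) T ×ˢ (Set.univ : Set 𝒳))ᶜ = 0)
    (μ : Measure (ℝ × 𝒳)) [IsFiniteMeasure μ]
    (hμ : ∀ B : Set (ℝ × 𝒳), MeasurableSet B → μ B = ∫⁻ ω, 𝒩 ω B ∂P)
    (X : Ω → ℝ → 𝒳 → ℝ)
    (hXm : ∀ s x, Measurable fun ω => X ω s x)
    (hX_rightCont : ∀ ω x s, ContinuousWithinAt (fun u => X ω u x) (Set.Ici s) s)
    (hXc : ∀ ω s, Continuous (X ω s))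
    (hindep : ∀ s ∈ Set.Icc (0:ℝ) T,
      IndepFun (fun ω => fun x => X ω s x)
        (fun ω => (𝒩 ω).restrict (Set.Icc (0:ℝ) s ×ˢ (Set.univ : Set 𝒳))) P)
    (Y : Ω → ℝ) (hY : Integrable Y P)
    (hdom : ∀ᵐ ω ∂P, ∀ s x, |X ω s x| ≤ Y ω)
    (hYN : ∫⁻ ω, ENNReal.ofReal (Y ω) * 𝒩 ω Set.univ ∂P < ⊤) :
    ∫⁻ ω, (∫⁻ q, ENNReal.ofReal (X ω q.1 q.2) ∂(𝒩 ω)) ∂P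
      = ∫⁻ q, (∫⁻ ω, ENNReal.ofReal (X ω q.1 q.2) ∂P) ∂μ := by
  rcases isEmpty_or_nonempty 𝒳 with h𝒳 | h𝒳
  · simp [Measure.eq_zero_of_isEmpty μ, Measure.eq_zero_of_isEmpty (𝒩 _)]
  let _ := TopologicalSpace.upgradeIsCompletelyMetrizable 𝒳
  have hS : MeasurableSet (Set.Icc 0 T ×ˢ Set.univ : Set (ℝ × 𝒳)) :=
    measurableSet_Icc.prod .univ
  have h𝒩S : ∀ ω, ∀ᵐ q ∂𝒩 ω, q ∈ Set.Icc 0 T ×ˢ Set.univ := fun ω => mem_ae_iff.2 (h𝒩supp ω)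
  have hμS : ∀ᵐ q ∂μ, q ∈ Set.Icc 0 T ×ˢ Set.univ :=
    mem_ae_iff.2 ((hμ _ hS.compl).trans (by simp [h𝒩supp]))
  exact (CampbellFormula.of_tendsto (B := fun ω => ENNReal.ofReal (Y ω))
    (campbellFormula_gridApprox_id h𝒩meas hμ hT hXm hXc hindep hY hdom hYN)
    (fun n ω => (measurable_gridApprox (hXc ω) measurable_id n).aemeasurable)
    (fun n q => (measurable_gridApprox_apply hXm n id q).aemeasurable)
    (hdom.mono fun ω h n => gridApprox_le h n id) hY.lintegral_lt_top.ne
    (hY.aemeasurable.ennreal_ofReal.mul (h𝒩meas _ .univ).aemeasurable) hYN.ne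
    (ae_of_all _ fun ω => (h𝒩S ω).mono fun q hq => tendsto_gridApprox_id hT (hX_rightCont ω) hq)
    (hμS.mono fun q hq => ae_of_all _ fun ω => tendsto_gridApprox_id hT (hX_rightCont ω) hq)).2.2

/-- Extended Campbell formula for time-indexed processes: if `X` on `[0,T] × 𝒳` is
càdlàg in time, continuous in space, for each `s` the family `(X_{s,x})_x` is
independent of the restriction of the random measure `𝒩` to `[0,s] × 𝒳`, and `X` is
dominated by an integrable `Y` with `E[Y 𝒩([0,T]×𝒳)] < ∞`, then
`E[∫ X_{s,x} 𝒩(ds,dx)] = ∫ E[X_{s,x}] μ(ds,dx)`. -/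
theorem campbell_time_indexed
    {Ω : Type*} [MeasurableSpace Ω] (P : Measure Ω) [IsProbabilityMeasure P]
    {𝒳 : Type*} [TopologicalSpace 𝒳] [PolishSpace 𝒳] [MeasurableSpace 𝒳] [BorelSpace 𝒳]
    (T : ℝ) (hT : 0 < T)
    (𝒩 : Ω → Measure (ℝ × 𝒳))
    (h𝒩meas : ∀ B : Set (ℝ × 𝒳), MeasurableSet B → Measurable fun ω => 𝒩 ω B)
    (h𝒩supp : ∀ ω, 𝒩 ω (Set.Icc (0:ℝ) T ×ˢ (Set.univ : Set 𝒳))ᶜ = 0)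
    (μ : Measure (ℝ × 𝒳)) [IsFiniteMeasure μ]
    (hμ : ∀ B : Set (ℝ × 𝒳), MeasurableSet B → μ B = ∫⁻ ω, 𝒩 ω B ∂P)
    (X : Ω → ℝ → 𝒳 → ℝ)
    (hXnn : ∀ ω s x, 0 ≤ X ω s x)
    (hXm : ∀ s x, Measurable fun ω => X ω s x)
    (hX_rightCont : ∀ ω x s, ContinuousWithinAt (fun u => X ω u x) (Set.Ici s) s)
    (hX_leftLim : ∀ ω x s, 0 < s →
      ∃ l : ℝ, Tendsto (fun u => X ω u x) (nhdsWithin s (Set.Iio s)) (nhds l))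
    (hXc : ∀ ω s, Continuous (X ω s))
    (hindep : ∀ s ∈ Set.Icc (0:ℝ) T,
      IndepFun (fun ω => fun x => X ω s x)
        (fun ω => (𝒩 ω).restrict (Set.Icc (0:ℝ) s ×ˢ (Set.univ : Set 𝒳))) P)
    (Y : Ω → ℝ) (hY : Integrable Y P)
    (hdom : ∀ᵐ ω ∂P, ∀ s x, |X ω s x| ≤ Y ω)
    (hYN : ∫⁻ ω, ENNReal.ofReal (Y ω) * 𝒩 ω Set.univ ∂P < ⊤) :
    ∫⁻ ω, (∫⁻ q, ENNReal.ofReal (X ω q.1 q.2) ∂(𝒩 ω)) ∂P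
      = ∫⁻ q, (∫⁻ ω, ENNReal.ofReal (X ω q.1 q.2) ∂P) ∂μ :=
  campbell_time_indexed_general P T hT 𝒩 h𝒩meas h𝒩supp μ hμ X hXm hX_rightCont hXc hindep Y hY hdom
    hYN
end

section
/- Let μ and ν be finite measures on a Polish space 𝒳 with μ absolutely continuous with respect to ν, and let f be the Radon–Nikodym derivative dμ/dν. Then for any dissecting system {A_{n,j}, 1 ≤ j ≤ K_n}_{n≥0} of 𝒳, the sum over j of (μ(A_{n,j})/ν(A_{n,j})) 1_{s ∈ A_{n,j}} converges as n → ∞ to f(s), for μ-almost all s ∈ 𝒳. -/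
open MeasureTheory Filter
open scoped ENNReal

/-!
The partitions at level `n` generate finite σ-algebras `𝒢ₙ`, increasing by nestedness, whose
supremum is the Borel σ-algebra because every open set is a union of arbitrarily small cells.
A `𝒢ₙ`-measurable function is constant on the cells, so `𝔼_ν[dμ/dν | 𝒢ₙ]` equals `μ(A)/ν(A)` on
every cell `A` of positive `ν`-measure. Lévy's upward theorem then gives `ν`-a.e., hence `μ`-a.e.,
convergence to `dμ/dν`.
-/

open MeasurableSpace Set

section FinitePartition

variable {X : Type*} {K : ℕ} {B : ℕ → Set X}

lemma eq_of_mem_of_mem_partition (hpart : ∀ x : X, ∃! j, j < K ∧ x ∈ B j) {x : X} {i j : ℕ}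
    (hi : i < K) (hxi : x ∈ B i) (hj : j < K) (hxj : x ∈ B j) : i = j :=
  (hpart x).unique ⟨hi, hxi⟩ ⟨hj, hxj⟩

lemma subset_or_disjoint_of_measurableSet_generateFrom_partition
    (hpart : ∀ x : X, ∃! j, j < K ∧ x ∈ B j) {S : Set X}
    (hS : MeasurableSet[generateFrom (B '' Iio K)] S) {j : ℕ} (hj : j < K) :
    B j ⊆ S ∨ Disjoint (B j) S := by
  refine generateFrom_induction (p := fun S _ => B j ⊆ S ∨ Disjoint (B j) S) _ ?_ ?_ ?_ ?_ S hS
  · rintro _ ⟨i, hi, rfl⟩ -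
    by_cases hij : i = j
    · exact Or.inl (hij ▸ subset_rfl)
    · refine Or.inr (disjoint_left.2 fun x hxj hxi => hij ?_)
      exact eq_of_mem_of_mem_partition hpart hi hxi hj hxj
  · exact Or.inr (disjoint_empty _)
  · intro T _ ih
    rcases ih with h | h
    · exact Or.inr (disjoint_compl_right_iff_subset.2 h)
    · exact Or.inl (subset_compl_iff_disjoint_right.2 h)
  · intro T _ ih
    by_cases h : ∃ i, ¬ Disjoint (B j) (T i)
    · obtain ⟨i, hi⟩ := h
      exact Or.inl (((ih i).resolve_right hi).trans (subset_iUnion T i))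
    · push Not at h
      exact Or.inr (disjoint_iUnion_right.2 h)

lemma MeasureTheory.StronglyMeasurable.eq_of_mem_partition {f : X → ℝ}
    (hpart : ∀ x : X, ∃! j, j < K ∧ x ∈ B j)
    (hf : StronglyMeasurable[generateFrom (B '' Iio K)] f) {j : ℕ} (hj : j < K) {x y : X}
    (hx : x ∈ B j) (hy : y ∈ B j) : f y = f x := by
  have hS : MeasurableSet[generateFrom (B '' Iio K)] (f ⁻¹' {f x}) :=
    hf.measurable (measurableSet_singleton _)
  rcases subset_or_disjoint_of_measurableSet_generateFrom_partition hpart hS hj with h | h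
  · exact h hy
  · exact absurd (rfl : f x = f x) (disjoint_left.1 h hx)

lemma sum_mul_indicator_one_of_mem_partition {M : Type*} [NonAssocSemiring M]
    (hpart : ∀ x : X, ∃! j, j < K ∧ x ∈ B j) (c : ℕ → M) {j : ℕ} (hj : j < K) {x : X}
    (hx : x ∈ B j) :
    ∑ i ∈ Finset.range K, c i * (B i).indicator (fun _ => (1 : M)) x = c j := by
  refine (Finset.sum_eq_single j (fun i hi hij => ?_) (fun hj' => ?_)).trans ?_
  · have hxi : x ∉ B i := fun hxi =>
      hij (eq_of_mem_of_mem_partition hpart (Finset.mem_range.1 hi) hxi hj hx)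
    rw [indicator_of_notMem hxi, mul_zero]
  · exact absurd (Finset.mem_range.2 hj) hj'
  · rw [indicator_of_mem hx, mul_one]

variable [m0 : MeasurableSpace X]

lemma generateFrom_partition_le (hmeas : ∀ j, j < K → MeasurableSet (B j)) :
    generateFrom (B '' Iio K) ≤ m0 :=
  generateFrom_le (by rintro _ ⟨j, hj, rfl⟩; exact hmeas j hj)

lemma condExp_generateFrom_partition_mul_measureReal {ν : Measure X} [IsFiniteMeasure ν]
    (hmeas : ∀ j, j < K → MeasurableSet (B j)) (hpart : ∀ x : X, ∃! j, j < K ∧ x ∈ B j)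
    {g : X → ℝ} (hg : Integrable g ν) {j : ℕ} (hj : j < K) {x : X} (hx : x ∈ B j) :
    ν[g | generateFrom (B '' Iio K)] x * ν.real (B j) = ∫ y in B j, g y ∂ν := by
  have hconst : ∀ y ∈ B j,
      ν[g | generateFrom (B '' Iio K)] y = ν[g | generateFrom (B '' Iio K)] x := fun y hy =>
    (stronglyMeasurable_condExp (m := generateFrom (B '' Iio K))).eq_of_mem_partition
      hpart hj hx hy
  rw [← setIntegral_condExp (generateFrom_partition_le hmeas) hg
      (measurableSet_generateFrom (mem_image_of_mem B hj)),
    setIntegral_congr_fun (hmeas j hj) hconst, setIntegral_const, smul_eq_mul, mul_comm]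

end FinitePartition

lemma generateFrom_partition_le_of_refines {X : Type*} {K L : ℕ} {B C : ℕ → Set X}
    (hpart : ∀ x : X, ∃! j, j < K ∧ x ∈ B j) (hcover : ∀ x : X, ∃ i, i < L ∧ x ∈ C i)
    (hrefines : ∀ i, i < L → ∃ j, j < K ∧ C i ⊆ B j) :
    generateFrom (B '' Iio K) ≤ generateFrom (C '' Iio L) := by
  refine generateFrom_le ?_
  rintro _ ⟨j, hj, rfl⟩
  have hunion : B j = ⋃ i, ⋃ (_ : i < L ∧ C i ⊆ B j), C i := by
    refine Subset.antisymm (fun x hx => ?_) (iUnion₂_subset fun i hi => hi.2)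
    obtain ⟨i, hi, hxi⟩ := hcover x
    obtain ⟨j', hj', hCB⟩ := hrefines i hi
    obtain rfl := eq_of_mem_of_mem_partition hpart hj' (hCB hxi) hj hx
    exact mem_iUnion₂.2 ⟨i, ⟨hi, hCB⟩, hxi⟩
  rw [hunion]
  exact .iUnion fun i => .iUnion fun hi => measurableSet_generateFrom (mem_image_of_mem C hi.1)

section DissectingSystem

variable {X : Type*} {K : ℕ → ℕ} {A : ℕ → ℕ → Set X}

lemma exists_mem_subset_of_isOpen [PseudoEMetricSpace X]
    (hcover : ∀ n, ∀ x : X, ∃ j, j < K n ∧ x ∈ A n j)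
    (hdiam : Tendsto (fun n => ⨆ j ∈ Finset.range (K n), Metric.ediam (A n j)) atTop (nhds 0))
    {U : Set X} (hU : IsOpen U) {x : X} (hx : x ∈ U) :
    ∃ n j, j < K n ∧ x ∈ A n j ∧ A n j ⊆ U := by
  obtain ⟨ε, hε, hball⟩ := EMetric.isOpen_iff.1 hU x hx
  obtain ⟨n, hn⟩ := (hdiam.eventually_lt_const hε).exists
  obtain ⟨j, hj, hxj⟩ := hcover n x
  refine ⟨n, j, hj, hxj, fun y hy => hball ?_⟩
  calc edist y x ≤ Metric.ediam (A n j) := Metric.edist_le_ediam_of_mem hy hxj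
    _ ≤ ⨆ j ∈ Finset.range (K n), Metric.ediam (A n j) :=
      le_iSup₂ (f := fun j _ => Metric.ediam (A n j)) j (Finset.mem_range.2 hj)
    _ < ε := hn

lemma iSup_generateFrom_partition_eq [PseudoEMetricSpace X] [m0 : MeasurableSpace X]
    [BorelSpace X] (hmeas : ∀ n j, j < K n → MeasurableSet (A n j))
    (hcover : ∀ n, ∀ x : X, ∃ j, j < K n ∧ x ∈ A n j)
    (hdiam : Tendsto (fun n => ⨆ j ∈ Finset.range (K n), Metric.ediam (A n j)) atTop (nhds 0)) :
    ⨆ n, generateFrom (A n '' Iio (K n)) = m0 := by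
  refine le_antisymm (iSup_le fun n => generateFrom_partition_le (hmeas n)) ?_
  rw [BorelSpace.measurable_eq (α := X)]
  refine generateFrom_le fun U hU => ?_
  have hunion : U = ⋃ n, ⋃ j, ⋃ (_ : j < K n ∧ A n j ⊆ U), A n j := by
    refine Subset.antisymm (fun x hx => ?_)
      (iUnion_subset fun n => iUnion₂_subset fun j hj => hj.2)
    obtain ⟨n, j, hj, hxj, hAU⟩ := exists_mem_subset_of_isOpen hcover hdiam hU hx
    exact mem_iUnion.2 ⟨n, mem_iUnion₂.2 ⟨j, ⟨hj, hAU⟩, hxj⟩⟩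
  rw [hunion]
  exact .iUnion fun n => .iUnion fun j => .iUnion fun hj =>
    le_iSup (fun n => generateFrom (A n '' Iio (K n))) n _
      (measurableSet_generateFrom (mem_image_of_mem (A n) hj.1))

def dissectingFiltration [m0 : MeasurableSpace X]
    (hmeas : ∀ n j, j < K n → MeasurableSet (A n j))
    (hpart : ∀ n, ∀ x : X, ∃! j, j < K n ∧ x ∈ A n j)
    (hnested : ∀ n j, j < K (n + 1) → ∃ j', j' < K n ∧ A (n + 1) j ⊆ A n j') :
    Filtration ℕ m0 where
  seq n := generateFrom (A n '' Iio (K n))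
  mono' := monotone_nat_of_le_succ fun n =>
    generateFrom_partition_le_of_refines (hpart n) (fun x => (hpart (n + 1) x).exists)
      (hnested n)
  le' n := generateFrom_partition_le (hmeas n)

end DissectingSystem

lemma ae_forall_mem_imp_measure_ne_zero {X ι : Type*} [MeasurableSpace X] [Countable ι]
    (ν : Measure X) (s : ι → Set X) : ∀ᵐ x ∂ν, ∀ i, x ∈ s i → ν (s i) ≠ 0 := by
  refine ae_all_iff.2 fun i => ?_
  by_cases hi : ν (s i) = 0
  · filter_upwards [measure_eq_zero_iff_ae_notMem.1 hi] with x hx hxi using absurd hxi hx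
  · exact .of_forall fun _ _ => hi

theorem dissecting_system_rnDeriv_general
    {𝒳 : Type*} [MetricSpace 𝒳] [MeasurableSpace 𝒳] [BorelSpace 𝒳]
    (μ ν : Measure 𝒳) [IsFiniteMeasure μ] [IsFiniteMeasure ν] (hac : μ ≪ ν)
    (K : ℕ → ℕ) (A : ℕ → ℕ → Set 𝒳)
    (hmeas : ∀ n j, j < K n → MeasurableSet (A n j))
    (hpart : ∀ n, ∀ x : 𝒳, ∃! j, j < K n ∧ x ∈ A n j)
    (hnested : ∀ n j, j < K (n + 1) → ∃ j', j' < K n ∧ A (n + 1) j ⊆ A n j')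
    (hdiam : Tendsto (fun n => ⨆ j ∈ Finset.range (K n), EMetric.diam (A n j))
      atTop (nhds 0)) :
    ∀ᵐ s ∂μ, Tendsto
      (fun n => ∑ j ∈ Finset.range (K n),
        (μ (A n j) / ν (A n j)) * (A n j).indicator (fun _ => (1 : ℝ≥0∞)) s)
      atTop (nhds (μ.rnDeriv ν s)) := by
  set ℱ := dissectingFiltration hmeas hpart hnested
  set g : 𝒳 → ℝ := fun x => (μ.rnDeriv ν x).toReal
  have hg : Integrable g ν := Measure.integrable_toReal_rnDeriv
  have hgℱ : StronglyMeasurable[⨆ n, ℱ n] g := by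
    rw [show ⨆ n, ℱ n = ‹MeasurableSpace 𝒳› from
      iSup_generateFrom_partition_eq hmeas (fun n x => (hpart n x).exists) hdiam]
    exact (Measure.measurable_rnDeriv μ ν).ennreal_toReal.stronglyMeasurable
  refine hac.ae_le ?_
  filter_upwards [hg.tendsto_ae_condExp hgℱ, Measure.rnDeriv_lt_top μ ν,
    ae_forall_mem_imp_measure_ne_zero ν fun p : ℕ × ℕ => A p.1 p.2] with s hlim hfin hpos
  have hcell : ∀ n, ∑ j ∈ Finset.range (K n),
      (μ (A n j) / ν (A n j)) * (A n j).indicator (fun _ => (1 : ℝ≥0∞)) s =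
        ENNReal.ofReal (ν[g | ℱ n] s) := fun n => by
    obtain ⟨j, ⟨hj, hsj⟩, -⟩ := hpart n s
    have hν : ν (A n j) ≠ 0 := hpos (n, j) hsj
    have hcond : ν[g | ℱ n] s * ν.real (A n j) = μ.real (A n j) :=
      (condExp_generateFrom_partition_mul_measureReal (hmeas n) (hpart n) hg hj hsj).trans
        (Measure.setIntegral_toReal_rnDeriv hac _)
    rw [sum_mul_indicator_one_of_mem_partition (hpart n) _ hj hsj]
    have hνr : ν.real (A n j) ≠ 0 := ENNReal.toReal_ne_zero.2 ⟨hν, measure_ne_top _ _⟩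
    rw [eq_div_of_mul_eq hνr hcond, measureReal_def, measureReal_def, ← ENNReal.toReal_div,
      ENNReal.ofReal_toReal (ENNReal.div_ne_top (measure_ne_top _ _) hν)]
  rw [tendsto_congr hcell, ← ENNReal.ofReal_toReal hfin.ne]
  exact (ENNReal.continuous_ofReal.tendsto _).comp hlim

/-- Kallenberg's differentiation theorem along a dissecting system: if `μ ≪ ν` are
finite measures on a Polish space and `{A n j : j < K n}` is a dissecting system
(nested finite measurable partitions whose maximal diameter tends to `0`), then
`∑_j (μ(A n j)/ν(A n j)) 1_{s ∈ A n j} → dμ/dν (s)` for `μ`-almost all `s`. -/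
theorem dissecting_system_rnDeriv
    {𝒳 : Type*} [MetricSpace 𝒳] [PolishSpace 𝒳] [MeasurableSpace 𝒳] [BorelSpace 𝒳]
    (μ ν : Measure 𝒳) [IsFiniteMeasure μ] [IsFiniteMeasure ν] (hac : μ ≪ ν)
    (K : ℕ → ℕ) (A : ℕ → ℕ → Set 𝒳)
    (hmeas : ∀ n j, j < K n → MeasurableSet (A n j))
    (hpart : ∀ n, ∀ x : 𝒳, ∃! j, j < K n ∧ x ∈ A n j)
    (hnested : ∀ n j, j < K (n + 1) → ∃ j', j' < K n ∧ A (n + 1) j ⊆ A n j')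
    (hdiam : Tendsto (fun n => ⨆ j ∈ Finset.range (K n), EMetric.diam (A n j))
      atTop (nhds 0)) :
    ∀ᵐ s ∂μ, Tendsto
      (fun n => ∑ j ∈ Finset.range (K n),
        (μ (A n j) / ν (A n j)) * (A n j).indicator (fun _ => (1 : ℝ≥0∞)) s)
      atTop (nhds (μ.rnDeriv ν s)) :=
  dissecting_system_rnDeriv_general μ ν hac K A hmeas hpart hnested hdiam
end
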